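/- arXiv:2410.12085 — 3 statements merged into one kernel-verified Lean document; each statement's English description precedes it below -/
import Mathlib

section
/- For real numbers μ₁, μ₂, a real σ > 0, and a real α > 1, the Rényi divergence of order α between the one-dimensional Gaussian measures N(μ₁, σ²) and N(μ₂, σ²) equals α(μ₁ − μ₂)²/(2σ²). -/
/-!
Both Gaussians have densities with respect to Lebesgue measure, so `dP/dQ` is the ratio of the
densities `p₁ / p₂`, and `p₂ (p₁ / p₂) ^ α = p₂ ^ (1 - α) p₁ ^ α` is, after completing the square,
`exp (α (α - 1) (μ₁ - μ₂)² / (2v))` times the Gaussian density with mean `α μ₁ + (1 - α) μ₂`.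
Hence `∫ (dP/dQ) ^ α dQ = exp (α (α - 1) (μ₁ - μ₂)² / (2v))`, and dividing its logarithm by
`α - 1` gives `α (μ₁ - μ₂)² / (2v)`.
-/

open MeasureTheory ProbabilityTheory

/- Rényi divergence of order `α` between measures `P` and `Q`:
`D_α(P‖Q) = (1/(α−1))·log ∫ (dP/dQ)^α dQ`, taken to be `+∞` if `P` is not
absolutely continuous with respect to `Q`. -/
open Classical in
noncomputable def renyiDiv {X : Type*} [MeasurableSpace X] (α : ℝ) (P Q : Measure X) : EReal :=
  if P ≪ Q then
    (((α - 1)⁻¹ * Real.log (∫ x, (P.rnDeriv Q x).toReal ^ α ∂Q) : ℝ) : EReal)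
  else ⊤

open scoped NNReal ENNReal

namespace ProbabilityTheory

open Real

variable {μ₁ μ₂ : ℝ} {v : ℝ≥0}

lemma toReal_rnDeriv_gaussianReal_gaussianReal (hv : v ≠ 0) :
    ∀ᵐ x, ((∂(gaussianReal μ₁ v)/∂(gaussianReal μ₂ v)) x).toReal
      = gaussianPDFReal μ₁ v x / gaussianPDFReal μ₂ v x := by
  have hratio : ∂(gaussianReal μ₁ v)/∂(gaussianReal μ₂ v) =ᵐ[volume]
      fun x ↦ (gaussianPDF μ₂ v x)⁻¹ * (∂(gaussianReal μ₁ v)/∂volume) x := by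
    rw [gaussianReal_of_var_ne_zero μ₂ hv]
    exact Measure.rnDeriv_withDensity_right _ _ (measurable_gaussianPDF μ₂ v).aemeasurable
      (ae_of_all _ fun x ↦ (gaussianPDF_pos μ₂ hv x).ne')
      (ae_of_all _ fun _ ↦ ENNReal.ofReal_ne_top)
  filter_upwards [hratio, rnDeriv_gaussianReal μ₁ v] with x hx hx₁
  rw [hx, hx₁, ENNReal.toReal_mul, ENNReal.toReal_inv, toReal_gaussianPDF, toReal_gaussianPDF,
    div_eq_inv_mul]

lemma gaussianPDFReal_mul_div_rpow (α x : ℝ) :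
    gaussianPDFReal μ₂ v x * (gaussianPDFReal μ₁ v x / gaussianPDFReal μ₂ v x) ^ α
      = exp (α * (α - 1) * (μ₁ - μ₂) ^ 2 / (2 * v)) *
        gaussianPDFReal (α * μ₁ + (1 - α) * μ₂) v x := by
  rcases eq_or_ne v 0 with rfl | hv
  · simp [gaussianPDFReal]
  simp only [gaussianPDFReal]
  rw [mul_div_mul_left _ _ (by positivity), ← exp_sub, ← exp_mul, mul_assoc, ← exp_add,
    mul_left_comm, ← exp_add]
  congr 2
  field_simp
  ring

lemma integral_rnDeriv_rpow_gaussianReal (hv : v ≠ 0) (α : ℝ) :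
    ∫ x, ((∂(gaussianReal μ₁ v)/∂(gaussianReal μ₂ v)) x).toReal ^ α ∂(gaussianReal μ₂ v)
      = exp (α * (α - 1) * (μ₁ - μ₂) ^ 2 / (2 * v)) := by
  rw [integral_gaussianReal_eq_integral_smul hv]
  calc ∫ x, gaussianPDFReal μ₂ v x • ((∂(gaussianReal μ₁ v)/∂(gaussianReal μ₂ v)) x).toReal ^ α
      = ∫ x, exp (α * (α - 1) * (μ₁ - μ₂) ^ 2 / (2 * v)) *
          gaussianPDFReal (α * μ₁ + (1 - α) * μ₂) v x := by
        refine integral_congr_ae ?_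
        filter_upwards [toReal_rnDeriv_gaussianReal_gaussianReal hv] with x hx
        rw [hx, smul_eq_mul, gaussianPDFReal_mul_div_rpow]
    _ = exp (α * (α - 1) * (μ₁ - μ₂) ^ 2 / (2 * v)) := by
        rw [integral_const_mul, integral_gaussianPDFReal_eq_one _ hv, mul_one]

lemma renyiDiv_gaussianReal_of_var_ne_zero (hv : v ≠ 0) {α : ℝ} (hα : α ≠ 1) :
    renyiDiv α (gaussianReal μ₁ v) (gaussianReal μ₂ v)
      = ((α * (μ₁ - μ₂) ^ 2 / (2 * v) : ℝ) : EReal) := by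
  have hPQ : gaussianReal μ₁ v ≪ gaussianReal μ₂ v :=
    (gaussianReal_absolutelyContinuous μ₁ hv).trans (gaussianReal_absolutelyContinuous' μ₂ hv)
  rw [renyiDiv, if_pos hPQ, integral_rnDeriv_rpow_gaussianReal hv, log_exp]
  congr 1
  field_simp [sub_ne_zero.mpr hα]

end ProbabilityTheory

/-- The Rényi divergence of order `α > 1` between the one-dimensional Gaussian
measures `N(μ₁, σ²)` and `N(μ₂, σ²)` equals `α(μ₁ − μ₂)²/(2σ²)`. -/
theorem renyiDiv_gaussianReal (μ₁ μ₂ σ α : ℝ) (hσ : 0 < σ) (hα : 1 < α) :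
    renyiDiv α (gaussianReal μ₁ (σ ^ 2).toNNReal) (gaussianReal μ₂ (σ ^ 2).toNNReal)
      = ((α * (μ₁ - μ₂) ^ 2 / (2 * σ ^ 2) : ℝ) : EReal) := by
  have hv : (σ ^ 2).toNNReal ≠ 0 := by positivity
  rw [renyiDiv_gaussianReal_of_var_ne_zero hv hα.ne', Real.coe_toNNReal _ (by positivity)]
end

section
/- Let m be a positive integer, let x, y ∈ ℝ^m, let Δ > 0 with ‖x − y‖₂ ≤ Δ, let α > 1 and τ > 0 be reals, and set σ² = Δ²·α/(2τ). Let P be the product measure on ℝ^m whose i-th factor is N(xᵢ, σ²) and Q the product measure whose i-th factor is N(yᵢ, σ²). Then the Rényi divergence of order α satisfies D_α(P‖Q) = α·‖x − y‖₂²/(2σ²) ≤ τ. (This is the Rényi-differential-privacy guarantee of the Gaussian mechanism with ℓ₂-sensitivity Δ.) -/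
open MeasureTheory ProbabilityTheory

noncomputable def l2norm {m : ℕ} (x : Fin m → ℝ) : ℝ :=
  Real.sqrt (∑ i, (x i) ^ 2)

/-!
Writing `pᵢ`, `qᵢ` for the densities of `N(xᵢ, σ²)` and `N(yᵢ, σ²)`, the measure `P` has density
`∏ pᵢ(tᵢ)/qᵢ(tᵢ)` with respect to `Q`, so the integral in `D_α(P‖Q)` factorises over the
coordinates. For the densities `p`, `q` of `N(a, σ²)`, `N(b, σ²)`, completing the square shows
that `q · (p/q)^α` is `exp(α(α-1)(a-b)²/(2σ²))` times the density of `N(b + α(a-b), σ²)`, so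
each factor equals `exp(α(α-1)(xᵢ-yᵢ)²/(2σ²))`. Taking the logarithm and dividing by `α - 1`
gives `α‖x-y‖²/(2σ²)`, which is at most `τ` by the choice of `σ²`.
-/

open scoped ENNReal NNReal

theorem MeasureTheory.Measure.pi_withDensity {ι : Type*} [Fintype ι] {X : ι → Type*}
    [∀ i, MeasurableSpace (X i)] (μ : ∀ i, Measure (X i))
    [∀ i, IsProbabilityMeasure (μ i)] (f : ∀ i, X i → ℝ≥0∞) (hf : ∀ i, Measurable (f i))
    [∀ i, SigmaFinite ((μ i).withDensity (f i))] :
    Measure.pi (fun i => (μ i).withDensity (f i))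
      = (Measure.pi μ).withDensity (fun x => ∏ i, f i (x i)) := by
  refine Measure.pi_eq fun s hs => ?_
  have hind : (Set.univ.pi s).indicator (fun x => ∏ i, f i (x i))
      = fun x => ∏ i, (s i).indicator (f i) (x i) := by
    classical
    funext x
    simp only [Set.indicator_apply, Fintype.prod_ite_zero, Set.mem_univ_pi]
  rw [withDensity_apply _ (.univ_pi hs), ← lintegral_indicator (.univ_pi hs), hind,
    lintegral_prod_eq_prod_lintegral_of_indepFun _ _
      (iIndepFun_pi fun i => ((hf i).indicator (hs i)).aemeasurable)
      fun i => ((hf i).indicator (hs i)).comp (measurable_pi_apply i)]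
  refine Finset.prod_congr rfl fun i _ => ?_
  rw [withDensity_apply _ (hs i), ← lintegral_indicator (hs i),
    ← (measurePreserving_eval μ i).lintegral_comp ((hf i).indicator (hs i))]

theorem renyiDiv_withDensity {X : Type*} [MeasurableSpace X] (α : ℝ) (Q : Measure X)
    [SigmaFinite Q] {f : X → ℝ≥0∞} (hf : Measurable f) :
    renyiDiv α (Q.withDensity f) Q
      = (((α - 1)⁻¹ * Real.log (∫ x, (f x).toReal ^ α ∂Q) : ℝ) : EReal) := by
  rw [renyiDiv, if_pos (withDensity_absolutelyContinuous Q f),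
    integral_congr_ae ((Measure.rnDeriv_withDensity Q hf).mono fun x hx => by rw [hx])]

theorem gaussianReal_eq_withDensity_gaussianReal (a b : ℝ) {v : ℝ≥0} (hv : v ≠ 0) :
    gaussianReal a v = (gaussianReal b v).withDensity
      fun u => ENNReal.ofReal (gaussianPDFReal a v u / gaussianPDFReal b v u) := by
  rw [gaussianReal_of_var_ne_zero _ hv, gaussianReal_of_var_ne_zero _ hv,
    ← withDensity_mul _ (measurable_gaussianPDF b v) (by fun_prop)]
  congr 1
  funext u
  simp only [Pi.mul_apply, gaussianPDF]
  rw [← ENNReal.ofReal_mul (gaussianPDFReal_nonneg b v u),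
    mul_div_cancel₀ _ (gaussianPDFReal_pos b v u hv).ne']

theorem gaussianPDFReal_mul_div_rpow (a b α : ℝ) {v : ℝ≥0} (hv : v ≠ 0) (u : ℝ) :
    gaussianPDFReal b v u * (gaussianPDFReal a v u / gaussianPDFReal b v u) ^ α
      = Real.exp (α * (α - 1) * (a - b) ^ 2 / (2 * v)) *
        gaussianPDFReal (b + α * (a - b)) v u := by
  have hv' : (v : ℝ) ≠ 0 := NNReal.coe_ne_zero.mpr hv
  have hC : (Real.sqrt (2 * Real.pi * v))⁻¹ ≠ 0 := by positivity
  simp only [gaussianPDFReal]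
  rw [mul_div_mul_left _ _ hC, ← Real.exp_sub, Real.rpow_def_of_pos (Real.exp_pos _),
    Real.log_exp, mul_left_comm, mul_assoc, ← Real.exp_add, ← Real.exp_add]
  congr 2
  field_simp
  ring

theorem integral_gaussianPDFReal_div_rpow (a b α : ℝ) {v : ℝ≥0} (hv : v ≠ 0) :
    ∫ u, (gaussianPDFReal a v u / gaussianPDFReal b v u) ^ α ∂gaussianReal b v
      = Real.exp (α * (α - 1) * (a - b) ^ 2 / (2 * v)) := by
  simp_rw [integral_gaussianReal_eq_integral_smul hv, smul_eq_mul,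
    gaussianPDFReal_mul_div_rpow a b α hv]
  rw [integral_const_mul, integral_gaussianPDFReal_eq_one _ hv, mul_one]

theorem integral_pi_gaussianReal_prod_div_rpow {ι : Type*} [Fintype ι] (x y : ι → ℝ) (α : ℝ)
    {v : ℝ≥0} (hv : v ≠ 0) :
    ∫ t, (∏ i, ENNReal.ofReal
        (gaussianPDFReal (x i) v (t i) / gaussianPDFReal (y i) v (t i))).toReal ^ α
        ∂(Measure.pi fun i => gaussianReal (y i) v)
      = Real.exp (α * (α - 1) * (∑ i, (x i - y i) ^ 2) / (2 * v)) := by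
  have hratio (i : ι) (u : ℝ) : 0 ≤ gaussianPDFReal (x i) v u / gaussianPDFReal (y i) v u :=
    div_nonneg (gaussianPDFReal_nonneg _ _ _) (gaussianPDFReal_nonneg _ _ _)
  simp_rw [ENNReal.toReal_prod, ENNReal.toReal_ofReal (hratio _ _),
    ← Real.finsetProd_rpow _ _ (fun i _ => hratio i _)]
  rw [integral_fintype_prod_eq_prod
    fun i u => (gaussianPDFReal (x i) v u / gaussianPDFReal (y i) v u) ^ α]
  simp_rw [integral_gaussianPDFReal_div_rpow _ _ α hv, ← Real.exp_sum, Finset.mul_sum,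
    Finset.sum_div]

theorem gaussian_mechanism_rdp_general (m : ℕ) (x y : Fin m → ℝ) (Δ α τ : ℝ)
    (hΔ : 0 < Δ) (hxy : l2norm (x - y) ≤ Δ) (hα : 1 < α) (hτ : 0 < τ)
    (σ2 : ℝ) (hσ2 : σ2 = Δ ^ 2 * α / (2 * τ)) :
    renyiDiv α (Measure.pi fun i => gaussianReal (x i) σ2.toNNReal)
        (Measure.pi fun i => gaussianReal (y i) σ2.toNNReal)
      = ((α * (l2norm (x - y)) ^ 2 / (2 * σ2) : ℝ) : EReal) ∧
    ((α * (l2norm (x - y)) ^ 2 / (2 * σ2) : ℝ) : EReal) ≤ (τ : EReal) := by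
  have hσ2_pos : 0 < σ2 := by rw [hσ2]; positivity
  have hv : σ2.toNNReal ≠ 0 := (Real.toNNReal_pos.mpr hσ2_pos).ne'
  have hv_coe : (σ2.toNNReal : ℝ) = σ2 := Real.coe_toNNReal _ hσ2_pos.le
  have hl2 : l2norm (x - y) ^ 2 = ∑ i, (x i - y i) ^ 2 :=
    Real.sq_sqrt (Finset.sum_nonneg fun i _ => sq_nonneg _)
  have hP : (fun i => gaussianReal (x i) σ2.toNNReal)
      = fun i => (gaussianReal (y i) σ2.toNNReal).withDensity _ :=
    funext fun i => gaussianReal_eq_withDensity_gaussianReal (x i) (y i) hv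
  rw [hP, Measure.pi_withDensity _ _ fun i => by fun_prop,
    renyiDiv_withDensity _ _ (by fun_prop), integral_pi_gaussianReal_prod_div_rpow x y α hv,
    Real.log_exp, hv_coe, hl2]
  constructor
  · have : α - 1 ≠ 0 := by linarith
    congr 1
    field_simp
  · have hS : ∑ i, (x i - y i) ^ 2 ≤ Δ ^ 2 :=
      hl2 ▸ pow_le_pow_left₀ (Real.sqrt_nonneg _) hxy 2
    rw [EReal.coe_le_coe_iff, hσ2, div_le_iff₀ (by positivity)]
    field_simp
    nlinarith

/-- RDP guarantee of the Gaussian mechanism with ℓ₂-sensitivity `Δ`: with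
`σ² = Δ²·α/(2τ)`, the Rényi divergence of order `α` between the product Gaussians
centered at `x` and `y` (with `‖x − y‖₂ ≤ Δ`) equals `α‖x − y‖₂²/(2σ²) ≤ τ`. -/
theorem gaussian_mechanism_rdp (m : ℕ) (hm : 0 < m) (x y : Fin m → ℝ) (Δ α τ : ℝ)
    (hΔ : 0 < Δ) (hxy : l2norm (x - y) ≤ Δ) (hα : 1 < α) (hτ : 0 < τ)
    (σ2 : ℝ) (hσ2 : σ2 = Δ ^ 2 * α / (2 * τ)) :
    renyiDiv α (Measure.pi fun i => gaussianReal (x i) σ2.toNNReal)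
        (Measure.pi fun i => gaussianReal (y i) σ2.toNNReal)
      = ((α * (l2norm (x - y)) ^ 2 / (2 * σ2) : ℝ) : EReal) ∧
    ((α * (l2norm (x - y)) ^ 2 / (2 * σ2) : ℝ) : EReal) ≤ (τ : EReal) :=
  gaussian_mechanism_rdp_general m x y Δ α τ hΔ hxy hα hτ σ2 hσ2
end

section
/- Let x₁, …, x_n be points of ℝ^d, let t be an integer with 1 ≤ t ≤ n, and for r ≥ 0 and p ∈ ℝ^d let B_r(p) = #{i ∈ {1,…,n} : ‖xᵢ − p‖₂ ≤ r} and B̄_r(p) = min(B_r(p), t). Define L(r) = (1/t)·max over choices of t distinct indices i₁, …, i_t ∈ {1,…,n} of (B̄_r(x_{i₁}) + ⋯ + B̄_r(x_{i_t})). If two datasets (x₁, …, x_n) and (x′₁, …, x′_n) differ in exactly one point, then for every r ≥ 0 the corresponding values satisfy |L(r) − L′(r)| ≤ 2. (This is the sensitivity bound on the utility function of the GoodRadius subroutine.) -/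
/-- `B_r(p)`: the number of points of the dataset `x` within ℓ₂-distance `r` of `p`. -/
noncomputable def ballCount {d n : ℕ} (x : Fin n → EuclideanSpace ℝ (Fin d))
    (r : ℝ) (p : EuclideanSpace ℝ (Fin d)) : ℕ :=
  {i : Fin n | ‖x i - p‖ ≤ r}.ncard

/-- The GoodRadius utility function
`L(r) = (1/t)·max over t distinct indices i₁, …, i_t of (B̄_r(x_{i₁}) + ⋯ + B̄_r(x_{i_t}))`,
where `B̄_r(p) = min(B_r(p), t)`. -/
noncomputable def goodRadiusL {d n : ℕ} (x : Fin n → EuclideanSpace ℝ (Fin d))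
    (t : ℕ) (r : ℝ) : ℝ :=
  (1 / (t : ℝ)) *
    sSup ((fun s : Finset (Fin n) =>
      ∑ i ∈ s, min ((ballCount x r (x i) : ℝ)) (t : ℝ)) '' {s | s.card = t})

/-! Replacing the point `x j` changes the capped count `min (B_r(x_i)) t` by at most `1` for
`i ≠ j` (the centre is unchanged and only one point moves) and by at most `t` for `i = j`.
Hence every sum over `t` indices changes by at most `2t`, and so does its maximum. -/

-- An empty `S` gives the junk value `sSup ∅ = 0` on both sides.
lemma csSup_image_le_csSup_image_add {α : Type*} {S : Set α} (hS : S.Finite) {f g : α → ℝ}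
    {c : ℝ} (hc : 0 ≤ c) (hfg : ∀ a ∈ S, f a ≤ g a + c) :
    sSup (f '' S) ≤ sSup (g '' S) + c := by
  rcases S.eq_empty_or_nonempty with rfl | hne
  · simpa using hc
  refine csSup_le (hne.image f) ?_
  rintro _ ⟨a, ha, rfl⟩
  exact (hfg a ha).trans (add_le_add_left (le_csSup (hS.image g).bddAbove ⟨a, ha, rfl⟩) c)

section Sensitivity

variable {d n : ℕ} {x x' : Fin n → EuclideanSpace ℝ (Fin d)} {j : Fin n}

lemma ballCount_le_add_one (hagree : ∀ i, i ≠ j → x i = x' i) (r : ℝ)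
    (p : EuclideanSpace ℝ (Fin d)) :
    ballCount x r p ≤ ballCount x' r p + 1 := by
  have hsub : {i | ‖x i - p‖ ≤ r} ⊆ insert j {i | ‖x' i - p‖ ≤ r} := by
    intro i hi
    by_cases hij : i = j
    · exact Or.inl hij
    · exact Or.inr (show ‖x' i - p‖ ≤ r from hagree i hij ▸ hi)
  exact (Set.ncard_le_ncard hsub (Set.toFinite _)).trans (Set.ncard_insert_le _ _)

lemma min_ballCount_le (hagree : ∀ i, i ≠ j → x i = x' i) (t : ℕ) (r : ℝ) (i : Fin n) :
    min (ballCount x r (x i) : ℝ) t ≤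
      min (ballCount x' r (x' i) : ℝ) t + 1 + if i = j then (t : ℝ) else 0 := by
  split_ifs with hij
  · have : (0 : ℝ) ≤ min (ballCount x' r (x' i) : ℝ) t := by positivity
    linarith [min_le_right (ballCount x r (x i) : ℝ) t]
  · have hcount : (ballCount x r (x' i) : ℝ) ≤ ballCount x' r (x' i) + 1 := by
      exact_mod_cast ballCount_le_add_one hagree r (x' i)
    calc min (ballCount x r (x i) : ℝ) t
        ≤ min ((ballCount x' r (x' i) : ℝ) + 1) (t + 1) := by
          rw [hagree i hij]; exact min_le_min hcount (by linarith)
      _ = min (ballCount x' r (x' i) : ℝ) t + 1 + 0 := by rw [min_add_add_right, add_zero]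

lemma sum_min_ballCount_le (hagree : ∀ i, i ≠ j → x i = x' i) (t : ℕ) (r : ℝ)
    (s : Finset (Fin n)) (hs : s.card = t) :
    ∑ i ∈ s, min (ballCount x r (x i) : ℝ) t ≤
      ∑ i ∈ s, min (ballCount x' r (x' i) : ℝ) t + 2 * t := by
  have hextra : ∑ i ∈ s, ((1 : ℝ) + if i = j then (t : ℝ) else 0) ≤ 2 * t := by
    rw [Finset.sum_add_distrib, Finset.sum_ite_eq', Finset.sum_const, hs, nsmul_one]
    split_ifs <;> linarith [(t.cast_nonneg : (0 : ℝ) ≤ t)]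
  calc ∑ i ∈ s, min (ballCount x r (x i) : ℝ) t
      ≤ ∑ i ∈ s, (min (ballCount x' r (x' i) : ℝ) t + (1 + if i = j then (t : ℝ) else 0)) :=
        Finset.sum_le_sum fun i _ => (min_ballCount_le hagree t r i).trans_eq (add_assoc _ _ _)
    _ ≤ _ := by rw [Finset.sum_add_distrib]; linarith

lemma goodRadiusL_le_add_two (hagree : ∀ i, i ≠ j → x i = x' i) (t : ℕ) (r : ℝ) :
    goodRadiusL x t r ≤ goodRadiusL x' t r + 2 := by
  have hsup := csSup_image_le_csSup_image_add (Set.toFinite {s : Finset (Fin n) | s.card = t})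
    (by positivity) fun s hs => sum_min_ballCount_le hagree t r s hs
  unfold goodRadiusL
  rcases Nat.eq_zero_or_pos t with rfl | ht
  · simp
  calc (1 / (t : ℝ)) * sSup _ ≤ (1 / (t : ℝ)) * (sSup _ + 2 * t) := by gcongr
    _ = _ := by field_simp

end Sensitivity

theorem goodRadiusL_sensitivity_general (d n t : ℕ)
    (x x' : Fin n → EuclideanSpace ℝ (Fin d)) (j : Fin n)
    (hagree : ∀ i, i ≠ j → x i = x' i) (r : ℝ) :
    |goodRadiusL x t r - goodRadiusL x' t r| ≤ 2 := by
  have h := goodRadiusL_le_add_two hagree t r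
  have h' := goodRadiusL_le_add_two (fun i hi => (hagree i hi).symm) t r
  rw [abs_sub_le_iff]
  constructor <;> linarith

/-- Sensitivity bound on the utility function of the GoodRadius subroutine: if
two datasets differ in exactly one point, then `|L(r) − L′(r)| ≤ 2` for every
`r ≥ 0`. -/
theorem goodRadiusL_sensitivity (d n t : ℕ) (ht1 : 1 ≤ t) (htn : t ≤ n)
    (x x' : Fin n → EuclideanSpace ℝ (Fin d)) (j : Fin n)
    (hagree : ∀ i, i ≠ j → x i = x' i) (r : ℝ) (hr : 0 ≤ r) :
    |goodRadiusL x t r - goodRadiusL x' t r| ≤ 2 :=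
  goodRadiusL_sensitivity_general d n t x x' j hagree r
end
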